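/- Let C be a cartesian closed category with a fixed object S, and T the state monad T X = (S × X)^S. Let (X, h) be a T-algebra and f_X = h ∘ (q_{S×X})^* : S × X ⟶ X. Then r = h ∘ θ_X : X^S ⟶ X is a retraction of the transpose f_X^* : X ⟶ X^S, i.e. h ∘ θ_X ∘ f_X^* = id_X, where θ_X = ⟨p_{X^S}, ε_X⟩^* : X^S ⟶ T X. -/

import Mathlib

/-!
The algebra structure `h` of a `T`-algebra turns any section `g` of the evaluation
`ε_{S × X}` into a section `(g ≫ S ◁ h)^* ≫ h` of `h`: by naturality of currying this is
`g^* ≫ T h ≫ h = g^* ≫ μ ≫ h = (g ≫ ε)^* ≫ h = η ≫ h = id`. Transposing the composite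
`f_X^* ≫ θ_X` gives `⟨p, f_X⟩ = ⟨p, (q_{S×X})^*⟩ ≫ S ◁ h`, and `⟨p, (q_{S×X})^*⟩` is such a
section of `ε_{S × X}`.
-/

open CategoryTheory CategoryTheory.MonoidalCategory CategoryTheory.Limits
  CategoryTheory.CartesianMonoidalCategory CategoryTheory.CartesianClosed

namespace CategoryTheory.MonoidalClosed

/- The hypotheses `unit` and `assoc` are the laws of an algebra `a` for the monad of
`ihom.adjunction S`, whose unit is `ihom.coev S` and whose multiplication is
`(ihom S).map (ihom.ev S)`. -/
lemma curry_comp_whiskerLeft_comp_eq_id {C : Type*} [Category C] [MonoidalCategory C]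
    [MonoidalClosed C] {S X : C} (a : S ⟹ S ⊗ X ⟶ X)
    (unit : (ihom.coev S).app X ≫ a = 𝟙 X)
    (assoc : (ihom S).map ((ihom.ev S).app (S ⊗ X)) ≫ a = (ihom S).map (S ◁ a) ≫ a)
    (g : S ⊗ X ⟶ S ⊗ (S ⟹ S ⊗ X)) (hg : g ≫ (ihom.ev S).app (S ⊗ X) = 𝟙 _) :
    curry (g ≫ S ◁ a) ≫ a = 𝟙 X := by
  rw [← curry_id_eq_coev] at unit
  rwa [curry_natural_right, Category.assoc, ← assoc, ← Category.assoc, ← curry_natural_right, hg]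

variable {C : Type*} [Category C] [CartesianMonoidalCategory C] [MonoidalClosed C]

lemma curry_comp_curry_lift_fst_ev {S X Y : C} (g : S ⊗ Y ⟶ X) :
    curry g ≫ curry (lift (fst S (S ⟹ X)) ((ihom.ev S).app X)) = curry (lift (fst S Y) g) := by
  rw [← curry_natural_left, comp_lift, whiskerLeft_fst, ← uncurry_eq, uncurry_curry]

lemma lift_curry_comp_ev {S X Y : C} (h : Y ⟶ S) (g : S ⊗ Y ⟶ X) :
    lift h (curry g) ≫ (ihom.ev S).app X = lift h (𝟙 Y) ≫ g := by
  rw [← Category.id_comp (curry g), ← lift_whiskerLeft, Category.assoc, ← uncurry_eq,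
    uncurry_curry]

lemma curry_curry_snd_comp_comp_curry_lift_fst_ev_comp_eq_id {S X : C} (a : S ⟹ S ⊗ X ⟶ X)
    (unit : (ihom.coev S).app X ≫ a = 𝟙 X)
    (assoc : (ihom S).map ((ihom.ev S).app (S ⊗ X)) ≫ a = (ihom S).map (S ◁ a) ≫ a) :
    curry (curry (snd S (S ⊗ X)) ≫ a) ≫ curry (lift (fst S (S ⟹ X)) ((ihom.ev S).app X)) ≫ a =
      𝟙 X := by
  rw [← Category.assoc, curry_comp_curry_lift_fst_ev, ← lift_whiskerLeft]
  refine curry_comp_whiskerLeft_comp_eq_id a unit assoc _ ?_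
  rw [lift_curry_comp_ev, lift_snd]

end CategoryTheory.MonoidalClosed

/- `A.a` is passed as a bare morphism because its type `T A.A ⟶ A.A` is only
definitionally, not syntactically, `S ⟹ S ⊗ A.A ⟶ A.A`, which blocks rewriting. -/
/-- In a cartesian closed category `C` with a fixed object `S`, for the state
monad `T X = (S × X)^S` and a `T`-algebra `(X, h)` with `f_X = h ∘ (q_{S×X})^*`, the morphism
`r = h ∘ θ_X : X^S ⟶ X` is a retraction of the transpose `f_X^* : X ⟶ X^S`, where
`θ_X = ⟨p_{X^S}, ε_X⟩^*`. -/
theorem stmt4 {C : Type u} [Category.{v} C] [CartesianMonoidalCategory C] [MonoidalClosed C]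
    (S : C) (A : ((ihom.adjunction S).toMonad).Algebra) :
    MonoidalClosed.curry (MonoidalClosed.curry (snd S (S ⊗ A.A)) ≫ A.a) ≫
      MonoidalClosed.curry (lift (fst S (S ⟹ A.A)) ((ihom.ev S).app A.A)) ≫ A.a =
      𝟙 A.A :=
  MonoidalClosed.curry_curry_snd_comp_comp_curry_lift_fst_ev_comp_eq_id A.a A.unit A.assoc
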